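/- arXiv:math/9508222 — 2 statements merged into one kernel-verified Lean document; each statement's English description precedes it below -/
import Mathlib

section
/- Let T be an infinite rooted tree, and give its boundary ∂T the metric dist(ξ,ξ') = C·θ^{−n} when ξ and ξ' share exactly n edges, for constants C > 0 and θ > 1. Perform independent percolation with parameter p ∈ (0,1) on T, i.e. each edge is erased with probability 1 − p and retained with probability p, independently over edges. If dim(∂T) < log(1/p)/log θ, then with probability 1 all connected components of retained edges in T are finite. -/
open Set MeasureTheory ProbabilityTheory
open scoped ENNReal NNReal

noncomputable section

/-- The space of infinite sequences, used to carry the boundary of an infinite rooted tree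
on the vertex set of finite sequences. -/
def SeqSpace : Type := ℕ → ℕ

/-- The length-`n` prefix of a sequence, as a list. -/
def seqPrefix (x : SeqSpace) (n : ℕ) : List ℕ := List.ofFn (fun i : Fin n => x i)

/-- The boundary `∂T` of a tree `T` of finite sequences (rooted at the empty sequence):
the set of infinite paths from the root. -/
def treeBoundary (T : Set (List ℕ)) : Set SeqSpace := {x | ∀ n, seqPrefix x n ∈ T}

/-- The number of initial edges shared by two distinct boundary points: the first index at
which they differ. -/
def sharedEdges (x y : SeqSpace) : ℕ := sInf {n | x n ≠ y n}

/-- One step along a retained edge of the tree (edges are identified with their lower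
endpoint `u ++ [k]`). -/
def percStep (T : Set (List ℕ)) (retained : List ℕ → Bool) (u v : List ℕ) : Prop :=
  u ∈ T ∧ v ∈ T ∧
    (((∃ k : ℕ, v = u ++ [k]) ∧ retained v = true) ∨
     ((∃ k : ℕ, u = v ++ [k]) ∧ retained u = true))

/-- The connected component of the vertex `v` in the subgraph of retained edges. -/
def percComponent (T : Set (List ℕ)) (retained : List ℕ → Bool) (v : List ℕ) :
    Set (List ℕ) :=
  {u | Relation.ReflTransGen (percStep T retained) v u}

lemma seqPrefix_length (x : SeqSpace) (n : ℕ) : (seqPrefix x n).length = n := by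
  simp [seqPrefix]

lemma seqPrefix_succ (x : SeqSpace) (n : ℕ) :
    seqPrefix x (n+1) = seqPrefix x n ++ [x n] := by
  rw [seqPrefix, List.ofFn_succ', List.concat_eq_append]; rfl

lemma koenig (S : Set (List ℕ)) (hS : S.Infinite)
    (hpc : ∀ l ∈ S, ∀ l' : List ℕ, l' <+: l → l' ∈ S)
    (hlf : ∀ l ∈ S, {k : ℕ | l ++ [k] ∈ S}.Finite) :
    ∃ ξ : SeqSpace, ∀ n, seqPrefix ξ n ∈ S := by
  classical
  set P : List ℕ → Prop := fun l => {u | u ∈ S ∧ l <+: u}.Infinite with hPdef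
  have hmem : ∀ l, P l → l ∈ S := by
    intro l hl
    obtain ⟨u, hu⟩ := hl.nonempty
    exact hpc u hu.1 l hu.2
  have step : ∀ l, P l → ∃ k, P (l ++ [k]) := by
    intro l hl
    by_contra h
    push_neg at h
    have hsub : {u | u ∈ S ∧ l <+: u} ⊆
        {l} ∪ ⋃ k ∈ {k : ℕ | l ++ [k] ∈ S}, {u | u ∈ S ∧ l ++ [k] <+: u} := by
      rintro u ⟨huS, hlu⟩
      rcases eq_or_ne u l with rfl | hne
      · exact Or.inl rfl
      · have hlt : l.length < u.length :=
          lt_of_le_of_ne hlu.length_le (fun he => hne (hlu.eq_of_length he).symm)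
        have hpre := List.concat_get_prefix hlu hlt
        have hkS : l ++ [u.get ⟨l.length, hlt⟩] ∈ S := hpc u huS _ hpre
        exact Or.inr (Set.mem_biUnion hkS ⟨huS, hpre⟩)
    have hfin : ({l} ∪ ⋃ k ∈ {k : ℕ | l ++ [k] ∈ S}, {u | u ∈ S ∧ l ++ [k] <+: u}).Finite := by
      refine (Set.finite_singleton l).union ?_
      refine Set.Finite.biUnion (hlf l (hmem l hl)) ?_
      intro k _
      exact Set.not_infinite.1 (h k)
    exact hl (hfin.subset hsub)
  choose f hf using step
  have h0 : P [] := hS.mono (fun u hu => ⟨hu, List.nil_prefix⟩)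
  let g : ℕ → {l : List ℕ // P l} := fun n =>
    Nat.rec ⟨[], h0⟩ (fun _ ih => ⟨ih.1 ++ [f ih.1 ih.2], hf ih.1 ih.2⟩) n
  refine ⟨fun n => f (g n).1 (g n).2, ?_⟩
  have key : ∀ n, seqPrefix (fun n => f (g n).1 (g n).2) n = (g n).1 := by
    intro n
    induction n with
    | zero => rfl
    | succ n ih => exact (seqPrefix_succ (fun n => f (g n).1 (g n).2) n).trans (congrArg (· ++ [f (g n).1 (g n).2]) ih)
  intro n
  rw [key]
  exact hmem _ (g n).2

lemma prefix_snoc {w u : List ℕ} {k : ℕ} (h : w <+: u ++ [k]) : w <+: u ∨ w = u ++ [k] := by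
  rcases le_or_gt w.length u.length with hl | hl
  · exact Or.inl ((List.isPrefix_append_of_length hl).1 h)
  · right
    apply h.eq_of_length
    have := h.length_le
    simp only [List.length_append, List.length_cons, List.length_nil] at this ⊢
    omega

lemma component_ray (T : Set (List ℕ))
    (hpref : ∀ l ∈ T, ∀ l' : List ℕ, l' <+: l → l' ∈ T)
    (hlocfin : ∀ l ∈ T, {k : ℕ | l ++ [k] ∈ T}.Finite)
    (ret : List ℕ → Bool) (v : List ℕ)
    (hinf : (percComponent T ret v).Infinite) :
    ∃ ξ ∈ treeBoundary T, ∀ n, v.length ≤ n → ret (seqPrefix ξ (n+1)) = true := by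
  classical
  set S : Set (List ℕ) :=
    {u | u ∈ T ∧ ∀ w : List ℕ, w <+: u → ¬ (w <+: v) → ret w = true} with hSdef
  have hvT : v ∈ T := by
    have hns : ¬ percComponent T ret v ⊆ {v} :=
      fun h => hinf ((Set.finite_singleton v).subset h)
    obtain ⟨u, hu, hne⟩ := Set.not_subset.1 hns
    rcases (Relation.ReflTransGen.cases_head hu) with rfl | ⟨c, hc, -⟩
    · exact absurd rfl hne
    · exact hc.1
  have hcomp : percComponent T ret v ⊆ S := by
    intro u hu
    have hu' : Relation.ReflTransGen (percStep T ret) v u := hu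
    clear hu
    induction hu' with
    | refl => exact ⟨hvT, fun w hw hnw => absurd hw hnw⟩
    | tail h1 h2 ih =>
      rename_i b c
      rcases h2.2.2 with ⟨⟨k, rfl⟩, hret⟩ | ⟨⟨k, hbk⟩, hret⟩
      · refine ⟨h2.2.1, fun w hw hnw => ?_⟩
        rcases prefix_snoc hw with hw' | rfl
        · exact ih.2 w hw' hnw
        · exact hret
      · refine ⟨h2.2.1, fun w hw hnw => ?_⟩
        exact ih.2 w (hw.trans (hbk ▸ List.prefix_append _ _)) hnw
  have hSinf : S.Infinite := hinf.mono hcomp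
  have hSpc : ∀ l ∈ S, ∀ l' : List ℕ, l' <+: l → l' ∈ S := by
    intro l hl l' hl'
    exact ⟨hpref l hl.1 l' hl', fun w hw hnw => hl.2 w (hw.trans hl') hnw⟩
  have hSlf : ∀ l ∈ S, {k : ℕ | l ++ [k] ∈ S}.Finite := by
    intro l hl
    exact (hlocfin l hl.1).subset (fun k hk => hk.1)
  obtain ⟨ξ, hξ⟩ := koenig S hSinf hSpc hSlf
  refine ⟨ξ, fun n => (hξ n).1, fun n hn => ?_⟩
  refine (hξ (n+1)).2 _ (List.prefix_refl _) (fun hpv => ?_)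
  have := hpv.length_le
  rw [seqPrefix_length] at this
  omega

lemma real_core (C θ p d α : ℝ) (hC : 0 < C) (hθ : 1 < θ) (hp : 0 < p)
    (hdα : d ≤ α) (hpθ : p = θ ^ (-α)) (m N : ℕ) (hm : m ≤ N) :
    p ^ (N - m) ≤ (θ ^ d / (C ^ d * p ^ m)) * (C * θ ^ (-(N+1:ℕ):ℤ)) ^ d := by
  have hθ0 : (0:ℝ) < θ := lt_trans one_pos hθ
  have hz : (θ : ℝ) ^ (-(N+1:ℕ):ℤ) = θ ^ (-(N+1:ℝ)) := by
    rw [← Real.rpow_intCast θ (-(N+1:ℕ):ℤ)]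
    norm_num
  rw [hz]
  have h1 : (C * θ ^ (-(N+1:ℝ))) ^ d = C ^ d * θ ^ ((-(N+1:ℝ))*d) := by
    rw [Real.mul_rpow hC.le (Real.rpow_nonneg hθ0.le _), ← Real.rpow_mul hθ0.le]
  have h2 : p ^ N = θ ^ (-(α * N)) := by
    rw [hpθ, ← Real.rpow_natCast (θ ^ (-α)) N, ← Real.rpow_mul hθ0.le]
    ring_nf
  have h3 : p ^ N ≤ θ ^ (-((N:ℝ)*d)) := by
    rw [h2]
    apply Real.rpow_le_rpow_of_exponent_le hθ.le
    have hN0 : (0:ℝ) ≤ (N:ℝ) := Nat.cast_nonneg N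
    nlinarith
  have hCd : (0:ℝ) < C ^ d := Real.rpow_pos_of_pos hC d
  have hpm : (0:ℝ) < p ^ m := pow_pos hp m
  have hrhs : θ ^ d / (C^d * p^m) * (C^d * θ^((-(N+1:ℝ))*d)) = θ ^ (-((N:ℝ)*d)) / p ^ m := by
    rw [div_mul_eq_mul_div, mul_comm (C^d) (θ ^ ((-(N+1:ℝ))*d)), ← mul_assoc,
      ← Real.rpow_add hθ0, show d + (-(N+1:ℝ))*d = -((N:ℝ)*d) by ring,
      mul_comm (C^d) (p^m), mul_div_assoc]
    rw [mul_comm (p^m) (C^d), div_mul_eq_div_div, div_self hCd.ne', one_div,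
      div_eq_mul_inv]
  rw [h1, hrhs, pow_sub₀ p hp.ne' hm]
  exact div_le_div_of_nonneg_right h3 hpm.le

lemma ray_event_null (T : Set (List ℕ))
    (C θ : ℝ) (hC : 0 < C) (hθ : 1 < θ)
    [m' : MetricSpace SeqSpace]
    (hdist : ∀ x y : SeqSpace, x ≠ y → x ∈ treeBoundary T → y ∈ treeBoundary T →
      dist x y = C * θ ^ (-(sharedEdges x y : ℤ)))
    (p : ℝ) (hp : 0 < p) (hp1 : p < 1)
    (hdim : dimH (treeBoundary T) < ENNReal.ofReal (Real.log (1 / p) / Real.log θ))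
    (Ω : Type) (mΩ : MeasurableSpace Ω) (μ : Measure Ω) [IsProbabilityMeasure μ]
    (retained : List ℕ → Ω → Bool)
    (hmeas : ∀ e, Measurable (retained e))
    (hber : ∀ e : List ℕ, e ≠ [] → e ∈ T →
      μ {ω | retained e ω = true} = ENNReal.ofReal p)
    (hindep : iIndepFun retained μ) (m : ℕ) :
    μ {ω | ∃ ξ ∈ treeBoundary T, ∀ n, m ≤ n → retained (seqPrefix ξ (n+1)) ω = true} = 0 := by
  classical
  letI : MeasurableSpace SeqSpace := borel SeqSpace
  haveI : BorelSpace SeqSpace := ⟨rfl⟩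
  set α : ℝ := Real.log (1 / p) / Real.log θ with hαdef
  have hθ0 : (0:ℝ) < θ := lt_trans one_pos hθ
  have hα : 0 < α := div_pos (Real.log_pos (one_lt_one_div hp hp1)) (Real.log_pos hθ)
  have hpθ : p = θ ^ (-α) := by
    have hlog : Real.log θ ≠ 0 := ne_of_gt (Real.log_pos hθ)
    rw [Real.rpow_neg hθ0.le, Real.rpow_def_of_pos hθ0, hαdef,
      mul_div_cancel₀ _ hlog, Real.exp_log (by positivity), one_div, inv_inv]
  -- pick dimension d
  obtain ⟨c, hc1, hc2⟩ := exists_between hdim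
  have hc_top : c ≠ ⊤ := (hc2.trans ENNReal.ofReal_lt_top).ne
  set d : ℝ := (c.toNNReal : ℝ) with hddef
  have hcd : ((c.toNNReal : ℝ≥0∞)) = c := ENNReal.coe_toNNReal hc_top
  have hH : μH[d] (treeBoundary T) = 0 :=
    hausdorffMeasure_of_dimH_lt (by rw [hcd]; exact hc1)
  have hd0 : 0 < d := by
    have hc0 : c ≠ 0 := (pos_of_gt hc1).ne'
    simp only [hddef, NNReal.coe_pos]
    exact ENNReal.toNNReal_pos hc0 hc_top
  have hdα : d < α := by
    have h := hc2
    rw [← hcd, ← ENNReal.ofReal_coe_nnreal, ENNReal.ofReal_lt_ofReal_iff hα] at h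
    exact h
  -- agreement of prefixes on small sets
  have agree : ∀ (U : Set SeqSpace) (N : ℕ),
      EMetric.diam U ≤ ENNReal.ofReal (C * θ ^ (-(N:ℕ):ℤ)) →
      ∀ ζ, ζ ∈ U ∩ treeBoundary T → ∀ ξ, ξ ∈ U ∩ treeBoundary T →
        ∀ i, i < N → ζ i = ξ i := by
    intro U N hU ζ hζ ξ hξ i hi
    by_cases hzx : ζ = ξ
    · rw [hzx]
    · have hd1 : dist ζ ξ ≤ C * θ ^ (-(N:ℕ):ℤ) := by
        have h4 : edist ζ ξ ≤ ENNReal.ofReal (C * θ ^ (-(N:ℕ):ℤ)) :=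
          (EMetric.edist_le_diam_of_mem hζ.1 hξ.1).trans hU
        rw [edist_dist] at h4
        exact (ENNReal.ofReal_le_ofReal_iff (by positivity)).1 h4
      rw [hdist ζ ξ hzx hζ.2 hξ.2] at hd1
      have hNs : N ≤ sharedEdges ζ ξ := by
        have h5 : θ ^ (-(sharedEdges ζ ξ:ℤ)) ≤ θ ^ (-(N:ℕ):ℤ) :=
          le_of_mul_le_mul_left hd1 hC
        have h6 := (zpow_le_zpow_iff_right₀ hθ).1 h5
        omega
      by_contra hne
      have h7 : sharedEdges ζ ξ ≤ i := Nat.sInf_le hne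
      omega
  set K : ℝ≥0∞ := ENNReal.ofReal (θ ^ d / (C ^ d * p ^ m)) with hKdef
  have hK_top : K ≠ ⊤ := ENNReal.ofReal_ne_top
  have main : ∀ εr : ℝ, 0 < εr →
      μ {ω | ∃ ξ ∈ treeBoundary T, ∀ n, m ≤ n → retained (seqPrefix ξ (n+1)) ω = true}
        ≤ (K + 2) * ENNReal.ofReal εr := by
    intro εr hεr
    -- extract a cover
    have h1 := MeasureTheory.Measure.hausdorffMeasure_apply (X := SeqSpace) d (treeBoundary T)
    rw [hH] at h1
    set r₀ : ℝ≥0∞ := ENNReal.ofReal (C * θ ^ (-(m+1:ℕ):ℤ)) with hr₀def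
    have hr₀ : 0 < r₀ := ENNReal.ofReal_pos.2 (by positivity)
    have h2 : (⨅ (t : ℕ → Set SeqSpace) (_ : treeBoundary T ⊆ ⋃ n, t n)
        (_ : ∀ n, EMetric.diam (t n) ≤ r₀),
          ∑' n, ⨆ _ : (t n).Nonempty, EMetric.diam (t n) ^ d) = 0 := by
      refine le_antisymm ?_ zero_le
      have h2' := h1.symm.le
      calc _ ≤ ⨆ (r : ℝ≥0∞) (_ : 0 < r), (⨅ (t : ℕ → Set SeqSpace)
            (_ : treeBoundary T ⊆ ⋃ n, t n) (_ : ∀ n, EMetric.diam (t n) ≤ r),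
            ∑' n, ⨆ _ : (t n).Nonempty, EMetric.diam (t n) ^ d) := by
              exact le_iSup₂ (f := fun r (_ : 0 < r) => ⨅ (t : ℕ → Set SeqSpace)
                (_ : treeBoundary T ⊆ ⋃ n, t n) (_ : ∀ n, EMetric.diam (t n) ≤ r),
                ∑' n, ⨆ _ : (t n).Nonempty, EMetric.diam (t n) ^ d) r₀ hr₀
        _ ≤ 0 := h2'
    have h3 : (⨅ (t : ℕ → Set SeqSpace) (_ : treeBoundary T ⊆ ⋃ n, t n)
        (_ : ∀ n, EMetric.diam (t n) ≤ r₀),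
          ∑' n, ⨆ _ : (t n).Nonempty, EMetric.diam (t n) ^ d) < ENNReal.ofReal εr := by
      rw [h2]
      exact ENNReal.ofReal_pos.2 hεr
    simp only [iInf_lt_iff] at h3
    obtain ⟨t, hcov, hdiam, hsum⟩ := h3
    have key : ∀ n : ℕ, ∃ E : Set Ω, MeasurableSet E ∧
        (∀ ω ζ, ζ ∈ t n → ζ ∈ treeBoundary T →
          (∀ j, m ≤ j → retained (seqPrefix ζ (j+1)) ω = true) → ω ∈ E) ∧
        μ E ≤ K * (⨆ _ : (t n).Nonempty, EMetric.diam (t n) ^ d) +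
          ENNReal.ofReal (εr * (1/2)^n) := by
      intro n
      by_cases hne : (t n ∩ treeBoundary T).Nonempty
      · obtain ⟨ξ, hξU, hξb⟩ := hne
        have hsup : (⨆ _ : (t n).Nonempty, EMetric.diam (t n) ^ d)
            = EMetric.diam (t n) ^ d := iSup_pos ⟨ξ, hξU⟩
        have hN : ∃ N : ℕ, m + 1 ≤ N ∧
            (∀ ζ, ζ ∈ t n ∩ treeBoundary T → ∀ i, i < N → ζ i = ξ i) ∧
            ENNReal.ofReal (p ^ (N - m)) ≤ K * EMetric.diam (t n) ^ d +
              ENNReal.ofReal (εr * (1/2)^n) := by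
          rcases eq_or_ne (EMetric.diam (t n)) 0 with hd00 | hd00
          · obtain ⟨N₁, hN₁⟩ := exists_pow_lt_of_lt_one
              (show (0:ℝ) < εr * (1/2)^n by positivity) hp1
            refine ⟨m + 1 + N₁, Nat.le_add_right _ _, ?_, ?_⟩
            · intro ζ hζ i _
              have hz : ζ = ξ := by
                have h11 := EMetric.edist_le_diam_of_mem hζ.1 hξU
                rw [show Metric.ediam (t n) = EMetric.diam (t n) from rfl, hd00] at h11
                exact edist_le_zero.1 h11
              rw [hz]
            · have hle : p ^ (m + 1 + N₁ - m) ≤ p ^ N₁ :=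
                pow_le_pow_of_le_one hp.le hp1.le (by omega)
              exact (ENNReal.ofReal_le_ofReal (hle.trans hN₁.le)).trans
                (self_le_add_left _ _)
          · have htop : EMetric.diam (t n) ≠ ⊤ :=
              ((hdiam n).trans_lt ENNReal.ofReal_lt_top).ne
            set D : ℝ := (EMetric.diam (t n)).toReal with hDdef
            have hD0 : 0 < D := ENNReal.toReal_pos hd00 htop
            obtain ⟨k₀, hk₀⟩ := exists_pow_lt_of_lt_one
              (show (0:ℝ) < D / C by positivity) (inv_lt_one_of_one_lt₀ hθ)
            have hk₀' : C * θ ^ (-(k₀:ℕ):ℤ) < D := by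
              have h8 : (θ⁻¹:ℝ)^k₀ = θ ^ (-(k₀:ℕ):ℤ) := by
                rw [← zpow_natCast (θ⁻¹) k₀, inv_zpow, ← zpow_neg]
              rw [← h8]
              calc C * (θ⁻¹:ℝ)^k₀ < C * (D/C) := (mul_lt_mul_iff_right₀ hC).2 hk₀
                _ = D := by field_simp
            set Pd : ℕ → Prop :=
              fun k => EMetric.diam (t n) ≤ ENNReal.ofReal (C * θ ^ (-(k:ℕ):ℤ)) with hPd
            have hPm1 : Pd (m+1) := hdiam n
            set n₀ := max (m+1) k₀ with hn₀
            have hnot : ¬ Pd n₀ := by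
              intro hcon
              have h9 : C * θ ^ (-(n₀:ℕ):ℤ) ≤ C * θ ^ (-(k₀:ℕ):ℤ) := by
                apply mul_le_mul_of_nonneg_left _ hC.le
                apply (zpow_le_zpow_iff_right₀ hθ).2
                have : k₀ ≤ n₀ := le_max_right _ _
                omega
              have h10 : EMetric.diam (t n) < EMetric.diam (t n) := by
                calc EMetric.diam (t n)
                    ≤ ENNReal.ofReal (C * θ ^ (-(n₀:ℕ):ℤ)) := hcon
                  _ ≤ ENNReal.ofReal (C * θ ^ (-(k₀:ℕ):ℤ)) := ENNReal.ofReal_le_ofReal h9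
                  _ < ENNReal.ofReal D := (ENNReal.ofReal_lt_ofReal_iff hD0).2 hk₀'
                  _ = EMetric.diam (t n) := ENNReal.ofReal_toReal htop
              exact absurd h10 (lt_irrefl _)
            set N := Nat.findGreatest Pd n₀ with hNdef
            have hmN : m + 1 ≤ N := Nat.le_findGreatest (le_max_left _ _) hPm1
            have hPN : Pd N := Nat.findGreatest_of_ne_zero hNdef.symm (by omega)
            have hPN1 : ¬ Pd (N+1) := by
              have hNlt : N < n₀ :=
                lt_of_le_of_ne (Nat.findGreatest_le n₀) (fun h => hnot (h ▸ hPN))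
              exact Nat.findGreatest_is_greatest (n := n₀) (by rw [← hNdef]; omega) (by omega)
            refine ⟨N, hmN, ?_, ?_⟩
            · intro ζ hζ i hi
              exact agree (t n) N hPN ζ hζ ξ ⟨hξU, hξb⟩ i hi
            · have hlow : ENNReal.ofReal (C * θ ^ (-(N+1:ℕ):ℤ)) < EMetric.diam (t n) :=
                not_le.1 hPN1
              calc ENNReal.ofReal (p ^ (N - m))
                  ≤ ENNReal.ofReal ((θ^d/(C^d*p^m)) * (C * θ ^ (-(N+1:ℕ):ℤ)) ^ d) :=
                    ENNReal.ofReal_le_ofReal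
                      (real_core C θ p d α hC hθ hp hdα.le hpθ m N (by omega))
                _ = K * ENNReal.ofReal ((C * θ ^ (-(N+1:ℕ):ℤ)) ^ d) := by
                    rw [← ENNReal.ofReal_mul (by positivity)]
                _ = K * (ENNReal.ofReal (C * θ ^ (-(N+1:ℕ):ℤ))) ^ d := by
                    rw [← ENNReal.ofReal_rpow_of_pos (by positivity)]
                _ ≤ K * EMetric.diam (t n) ^ d :=
                    mul_le_mul_right (ENNReal.rpow_le_rpow hlow.le hd0.le) K
                _ ≤ _ := le_self_add
        obtain ⟨N, hmN, hagree, hbound⟩ := hN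
        refine ⟨⋂ l ∈ (Finset.Ico m N).image (fun j => seqPrefix ξ (j+1)),
          (retained l) ⁻¹' {true}, ?_, ?_, ?_⟩
        · exact MeasurableSet.biInter (Finset.countable_toSet _)
            (fun l _ => (hmeas l) (measurableSet_singleton true))
        · intro ω ζ hζU hζb hret
          rw [Set.mem_iInter₂]
          rintro l hl
          rw [Finset.mem_image] at hl
          obtain ⟨j, hj, rfl⟩ := hl
          rw [Finset.mem_Ico] at hj
          have hpe : seqPrefix ξ (j+1) = seqPrefix ζ (j+1) :=
            congrArg List.ofFn (funext fun i =>
              (hagree ζ ⟨hζU, hζb⟩ i (lt_of_lt_of_le i.2 (by omega))).symm)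
          rw [hpe]
          exact hret j hj.1
        · have hmuE := hindep.measure_inter_preimage_eq_mul
            (S := (Finset.Ico m N).image (fun j => seqPrefix ξ (j+1)))
            (sets := fun _ => ({true} : Set Bool))
            (fun i _ => MeasurableSpace.measurableSet_top)
          rw [hmuE]
          have heach : ∀ l ∈ (Finset.Ico m N).image (fun j => seqPrefix ξ (j+1)),
              μ (retained l ⁻¹' {true}) = ENNReal.ofReal p := by
            intro l hl
            rw [Finset.mem_image] at hl
            obtain ⟨j, hj, rfl⟩ := hl
            have hpre : retained (seqPrefix ξ (j+1)) ⁻¹' {true}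
                = {ω | retained (seqPrefix ξ (j+1)) ω = true} := by
              ext ω; simp
            rw [hpre]
            apply hber
            · intro hnil
              have := congrArg List.length hnil
              rw [seqPrefix_length] at this
              simp at this
            · exact hξb (j+1)
          rw [Finset.prod_congr rfl heach, Finset.prod_const]
          have hcard : ((Finset.Ico m N).image (fun j => seqPrefix ξ (j+1))).card = N - m := by
            rw [Finset.card_image_of_injOn, Nat.card_Ico]
            intro a _ b _ hab
            have := congrArg List.length hab
            rw [seqPrefix_length, seqPrefix_length] at this
            omega
          rw [hcard, ← ENNReal.ofReal_pow hp.le, hsup]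
          exact hbound
      · refine ⟨∅, MeasurableSet.empty,
          fun ω ζ h1 h2 _ => (hne ⟨ζ, h1, h2⟩).elim, by simp⟩
    choose E hEmeas hEcov hEbound using key
    have hBsub : {ω | ∃ ξ ∈ treeBoundary T,
        ∀ n, m ≤ n → retained (seqPrefix ξ (n+1)) ω = true} ⊆ ⋃ n, E n := by
      rintro ω ⟨ζ, hζb, hζret⟩
      obtain ⟨n', hn'⟩ := Set.mem_iUnion.1 (hcov hζb)
      exact Set.mem_iUnion.2 ⟨n', hEcov n' ω ζ hn' hζb hζret⟩
    have hgeo : ∑' n : ℕ, ENNReal.ofReal (εr * (1/2)^n) = ENNReal.ofReal εr * 2 := by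
      have h12 : ∀ n : ℕ, ENNReal.ofReal (εr * (1/2)^n)
          = ENNReal.ofReal εr * (2⁻¹ : ℝ≥0∞)^n := by
        intro n
        rw [ENNReal.ofReal_mul hεr.le, ENNReal.ofReal_pow (by norm_num)]
        congr 2
        rw [one_div, ENNReal.ofReal_inv_of_pos two_pos, ENNReal.ofReal_ofNat]
      simp_rw [h12]
      rw [ENNReal.tsum_mul_left, ENNReal.tsum_geometric, ENNReal.one_sub_inv_two, inv_inv]
    calc μ {ω | ∃ ξ ∈ treeBoundary T,
          ∀ n, m ≤ n → retained (seqPrefix ξ (n+1)) ω = true}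
        ≤ μ (⋃ n, E n) := measure_mono hBsub
      _ ≤ ∑' n, μ (E n) := measure_iUnion_le _
      _ ≤ ∑' n, (K * (⨆ _ : (t n).Nonempty, EMetric.diam (t n) ^ d) +
            ENNReal.ofReal (εr * (1/2)^n)) := ENNReal.tsum_le_tsum hEbound
      _ = K * (∑' n, ⨆ _ : (t n).Nonempty, EMetric.diam (t n) ^ d) +
            ∑' n, ENNReal.ofReal (εr * (1/2)^n) := by
          rw [ENNReal.tsum_add, ENNReal.tsum_mul_left]
      _ ≤ K * ENNReal.ofReal εr + ENNReal.ofReal εr * 2 := by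
          rw [hgeo]
          exact add_le_add_left (mul_le_mul_right hsum.le K) _
      _ = (K + 2) * ENNReal.ofReal εr := by ring
  have hK2 : (K + 2) ≠ 0 := by simp
  have hK2t : (K + 2) ≠ ⊤ := ENNReal.add_ne_top.2 ⟨hK_top, by norm_num⟩
  refine nonpos_iff_eq_zero.1 (ENNReal.le_of_forall_pos_le_add fun r hr _ => ?_)
  set ε₀ : ℝ≥0∞ := min (r : ℝ≥0∞) 1 / (K + 2) with hε₀def
  have hε₀0 : ε₀ ≠ 0 := by
    rw [hε₀def]
    exact (ENNReal.div_pos (lt_min (ENNReal.coe_pos.2 hr) one_pos).ne' hK2t).ne'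
  have hε₀t : ε₀ ≠ ⊤ := by
    rw [hε₀def]
    exact (ENNReal.div_lt_top (by simp) hK2).ne
  have h := main ε₀.toReal (ENNReal.toReal_pos hε₀0 hε₀t)
  rw [ENNReal.ofReal_toReal hε₀t] at h
  calc μ {ω | ∃ ξ ∈ treeBoundary T,
        ∀ n, m ≤ n → retained (seqPrefix ξ (n+1)) ω = true}
      ≤ (K + 2) * ε₀ := h
    _ = min (↑r) 1 := ENNReal.mul_div_cancel hK2 hK2t
    _ ≤ 0 + ↑r := by simp [min_le_left]

/-- Lemma 3.3 (Hawkes, Lyons): if `∂T` carries the metric `dist(ξ,ξ') = C·θ^{−n}` (`n` the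
number of shared edges) and `dim(∂T) < log(1/p)/log θ`, then after independent percolation
with parameter `p` on the edges of `T`, almost surely all connected components of retained
edges are finite. -/
theorem tree_percolation_finite_components
    (T : Set (List ℕ)) (hroot : [] ∈ T)
    (hpref : ∀ l ∈ T, ∀ l' : List ℕ, l' <+: l → l' ∈ T)
    (hinf : T.Infinite)
    (hlocfin : ∀ l ∈ T, {k : ℕ | l ++ [k] ∈ T}.Finite)
    (C θ : ℝ) (hC : 0 < C) (hθ : 1 < θ)
    [m : MetricSpace SeqSpace]
    (hdist : ∀ x y : SeqSpace, x ≠ y → x ∈ treeBoundary T → y ∈ treeBoundary T →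
      dist x y = C * θ ^ (-(sharedEdges x y : ℤ)))
    (p : ℝ) (hp : 0 < p) (hp1 : p < 1)
    (hdim : dimH (treeBoundary T) < ENNReal.ofReal (Real.log (1 / p) / Real.log θ))
    (Ω : Type) (mΩ : MeasurableSpace Ω) (μ : Measure Ω) [IsProbabilityMeasure μ]
    (retained : List ℕ → Ω → Bool)
    (hmeas : ∀ e, Measurable (retained e))
    (hber : ∀ e : List ℕ, e ≠ [] → e ∈ T →
      μ {ω | retained e ω = true} = ENNReal.ofReal p)
    (hindep : iIndepFun retained μ) :
    ∀ᵐ ω ∂μ, ∀ v ∈ T, (percComponent T (fun e => retained e ω) v).Finite := by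
  have hnull := ray_event_null T C θ hC hθ hdist p hp hp1 hdim Ω mΩ μ retained hmeas hber hindep
  rw [MeasureTheory.ae_iff]
  have hsub : {ω | ¬ ∀ v ∈ T, (percComponent T (fun e => retained e ω) v).Finite}
      ⊆ ⋃ m : ℕ, {ω | ∃ ξ ∈ treeBoundary T,
          ∀ n, m ≤ n → retained (seqPrefix ξ (n+1)) ω = true} := by
    intro ω hω
    push_neg at hω
    obtain ⟨v, hvT, hvfin⟩ := hω
    obtain ⟨ξ, hξb, hξret⟩ := component_ray T hpref hlocfin (fun e => retained e ω) v hvfin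
    exact Set.mem_iUnion.2 ⟨v.length, ⟨ξ, hξb, hξret⟩⟩
  exact measure_mono_null hsub (measure_iUnion_null hnull)
end
end

section
/- Let Γ : [0,∞) → ℝ² be any continuous path and let t > 0. For any open disk U intersecting frontier(Γ[0,t]) such that Γ(t) ∉ closure(U), there is a δ > 0 such that for every s ∈ [t, t + δ]: U ∩ frontier(Γ[0,t]) ⊇ U ∩ frontier(Γ[0,s]) ≠ ∅. -/
open Set MeasureTheory Metric
open scoped ENNReal NNReal

noncomputable section

/-- The union of the unbounded connected components of the complement of `K ⊆ ℝ² = ℂ`. -/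
def unboundedPart (K : Set ℂ) : Set ℂ :=
  {x | x ∉ K ∧ ¬ Bornology.IsBounded (connectedComponentIn Kᶜ x)}

/-- The frontier ("outer boundary") of a compact set `K`: the topological boundary of the
unbounded connected component of the complement of `K`. -/
def outerFrontier (K : Set ℂ) : Set ℂ := frontier (unboundedPart K)

lemma cross_frontier {X : Type*} [TopologicalSpace X] {s t : Set X} (hs : IsPreconnected s)
    (h1 : (s ∩ t).Nonempty) (h2 : (s \ t).Nonempty) : (s ∩ frontier t).Nonempty := by
  by_contra h
  rw [Set.not_nonempty_iff_eq_empty] at h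
  have hsub : s ⊆ interior t ∪ (closure t)ᶜ := by
    intro x hx
    by_cases hxt : x ∈ interior t
    · exact Or.inl hxt
    · refine Or.inr fun hc => ?_
      have : x ∈ s ∩ frontier t := ⟨hx, hc, hxt⟩
      simp [h] at this
  have h1' : (s ∩ interior t).Nonempty := by
    obtain ⟨x, hxs, hxt⟩ := h1
    rcases hsub hxs with h' | h'
    · exact ⟨x, hxs, h'⟩
    · exact absurd (subset_closure hxt) h'
  have h2' : (s ∩ (closure t)ᶜ).Nonempty := by
    obtain ⟨x, hxs, hxt⟩ := h2
    rcases hsub hxs with h' | h'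
    · exact absurd (interior_subset h') hxt
    · exact ⟨x, hxs, h'⟩
  obtain ⟨x, _, hx1, hx2⟩ := hs _ _ isOpen_interior isClosed_closure.isOpen_compl hsub h1' h2'
  exact hx2 (subset_closure (interior_subset hx1))

lemma unboundedPart_anti {K K' : Set ℂ} (h : K ⊆ K') : unboundedPart K' ⊆ unboundedPart K := by
  rintro x ⟨hx1, hx2⟩
  exact ⟨fun hxK => hx1 (h hxK), fun hb =>
    hx2 (hb.subset (connectedComponentIn_mono x (compl_subset_compl.2 h)))⟩

lemma isOpen_unboundedPart {K : Set ℂ} (hK : IsClosed K) : IsOpen (unboundedPart K) := by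
  rw [isOpen_iff_mem_nhds]
  intro x hx
  have hxK : x ∈ Kᶜ := hx.1
  have hopen : IsOpen (connectedComponentIn Kᶜ x) := hK.isOpen_compl.connectedComponentIn
  refine Filter.mem_of_superset (hopen.mem_nhds (mem_connectedComponentIn hxK)) ?_
  intro v hv
  refine ⟨connectedComponentIn_subset _ _ hv, ?_⟩
  rw [← connectedComponentIn_eq hv]
  exact hx.2

lemma outerFrontier_subset {K : Set ℂ} (hK : IsClosed K) : outerFrontier K ⊆ K := by
  intro x hx
  by_contra hxK
  rcases em (Bornology.IsBounded (connectedComponentIn Kᶜ x)) with hb | hb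
  · have hopen : IsOpen (connectedComponentIn Kᶜ x) := hK.isOpen_compl.connectedComponentIn
    have hmem : x ∈ connectedComponentIn Kᶜ x := mem_connectedComponentIn hxK
    obtain ⟨v, hv1, hv2⟩ :=
      mem_closure_iff.1 (frontier_subset_closure hx) _ hopen hmem
    exact hv2.2 (by rw [← connectedComponentIn_eq hv1]; exact hb)
  · have hmem : x ∈ unboundedPart K := ⟨hxK, hb⟩
    exact hx.2 (by rw [(isOpen_unboundedPart hK).interior_eq]; exact hmem)

/-- Semicontinuity of the local frontier: if `U` is an open disk meeting the frontier of
`Γ[0,t]` with `Γ(t) ∉ closure U`, then for some `δ > 0` and all `s ∈ [t, t+δ]`,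
`U ∩ frontier(Γ[0,t]) ⊇ U ∩ frontier(Γ[0,s]) ≠ ∅`. -/
theorem frontier_local_semicontinuity
    (Γ : ℝ → ℂ) (hΓ : Continuous Γ) (t : ℝ) (ht : 0 < t)
    (z : ℂ) (ρ : ℝ) (hρ : 0 < ρ)
    (hmeet : (Metric.ball z ρ ∩ outerFrontier (Γ '' Set.Icc 0 t)).Nonempty)
    (hend : Γ t ∉ closure (Metric.ball z ρ)) :
    ∃ δ : ℝ, 0 < δ ∧ ∀ s ∈ Set.Icc t (t + δ),
      (Metric.ball z ρ ∩ outerFrontier (Γ '' Set.Icc 0 s)).Nonempty ∧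
      Metric.ball z ρ ∩ outerFrontier (Γ '' Set.Icc 0 s) ⊆
        Metric.ball z ρ ∩ outerFrontier (Γ '' Set.Icc 0 t) := by
  set U : Set ℂ := Metric.ball z ρ with hU
  set Kt : Set ℂ := Γ '' Set.Icc 0 t with hKtdef
  have hKtc : IsCompact Kt := isCompact_Icc.image hΓ
  have hΓtK : Γ t ∈ Kt := ⟨t, ⟨ht.le, le_refl t⟩, rfl⟩
  obtain ⟨x₀, hx₀U, hx₀F⟩ := hmeet
  have hx₀K : x₀ ∈ Kt := outerFrontier_subset hKtc.isClosed hx₀F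
  -- pick a point y of U in the unbounded part of Ktᶜ
  obtain ⟨y, hyU, hyP⟩ : (U ∩ unboundedPart Kt).Nonempty :=
    mem_closure_iff.1 (frontier_subset_closure hx₀F) _ Metric.isOpen_ball hx₀U
  obtain ⟨hyK, hyUnb⟩ := hyP
  -- the connected component of y in Ktᶜ
  set C : Set ℂ := connectedComponentIn Ktᶜ y with hCdef
  have hyC : y ∈ C := mem_connectedComponentIn hyK
  have hCopen : IsOpen C := hKtc.isClosed.isOpen_compl.connectedComponentIn
  have hCpath : IsPathConnected C := by
    have h1 : IsConnected C := by
      rw [hCdef]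
      exact isConnected_connectedComponentIn_iff.mpr (show y ∈ Ktᶜ from hyK)
    exact hCopen.isConnected_iff_isPathConnected.1 h1
  -- a radius R with Kt ⊆ closedBall 0 R
  obtain ⟨R, hR⟩ := hKtc.isBounded.subset_closedBall (0 : ℂ)
  -- a far away point w in C
  obtain ⟨w, hwC, hwR⟩ : ∃ w ∈ C, R < ‖w‖ := by
    by_contra hcon
    push_neg at hcon
    exact hyUnb ((Metric.isBounded_closedBall (x := (0:ℂ)) (r := R)).subset
      fun v hv => by simpa [Metric.mem_closedBall, dist_eq_norm] using hcon v hv)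
  have hRnn : (0:ℝ) ≤ R := le_trans dist_nonneg (Metric.mem_closedBall.1 (hR hΓtK))
  -- a path from y to w inside C
  obtain ⟨γ, hγ⟩ := hCpath.joinedIn y hyC w hwC
  have hPcomp : IsCompact (Set.range ⇑γ) := isCompact_range γ.continuous
  -- the escape set A = path ∪ ray
  set ray : Set ℂ := (fun u : ℝ => w + u • w) '' Set.Ici 0 with hraydef
  set A : Set ℂ := Set.range ⇑γ ∪ ray with hAdef
  have hrayNorm : ∀ v ∈ ray, ‖w‖ ≤ ‖v‖ := by
    rintro v ⟨u, hu, rfl⟩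
    show ‖w‖ ≤ ‖w + u • w‖
    have heq : w + u • w = (1 + u) • w := by rw [add_smul, one_smul]
    rw [heq, norm_smul]
    have h1u : (1:ℝ) ≤ 1 + u := by linarith [mem_Ici.1 hu]
    calc ‖w‖ = 1 * ‖w‖ := (one_mul _).symm
      _ ≤ ‖(1 + u : ℝ)‖ * ‖w‖ := by
          apply mul_le_mul_of_nonneg_right _ (norm_nonneg w)
          rw [Real.norm_eq_abs, abs_of_nonneg (by linarith)]
          exact h1u
  have hAKt : ∀ v ∈ A, v ∉ Kt := by
    rintro v (hv | hv)
    · obtain ⟨u, rfl⟩ := hv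
      exact fun hmem => (connectedComponentIn_subset Ktᶜ y (hγ u)) hmem
    · intro hmem
      have := hR hmem
      rw [Metric.mem_closedBall, dist_eq_norm, sub_zero] at this
      exact absurd (le_trans (hrayNorm v hv) this) (not_le.2 hwR)
  have hyA : y ∈ A := Or.inl ⟨0, γ.source⟩
  have hwray : w ∈ ray := ⟨0, Set.self_mem_Ici, by simp⟩
  have hAconn : IsPreconnected A := by
    refine IsPreconnected.union w ⟨1, γ.target⟩ hwray ?_ ?_
    · exact (isConnected_range γ.continuous).isPreconnected
    · exact isPreconnected_Ici.image _ (Continuous.continuousOn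
        (continuous_const.add (continuous_id.smul continuous_const)))
  have hAunb : ¬ Bornology.IsBounded A := by
    intro hb
    obtain ⟨r, hr⟩ := hb.subset_closedBall 0
    have hwpos : 0 < ‖w‖ := lt_of_le_of_lt hRnn hwR
    set u : ℝ := max 0 (r / ‖w‖)
    have hu : u ∈ Set.Ici (0:ℝ) := Set.mem_Ici.2 (le_max_left _ _)
    have hmem : w + u • w ∈ A := Or.inr ⟨u, hu, rfl⟩
    have := hr hmem
    rw [Metric.mem_closedBall, dist_eq_norm, sub_zero] at this
    have heq : w + u • w = (1 + u) • w := by rw [add_smul, one_smul]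
    rw [heq, norm_smul, Real.norm_eq_abs, abs_of_nonneg (by positivity)] at this
    have hrw : r / ‖w‖ ≤ u := le_max_right _ _
    have : (1 + r / ‖w‖) * ‖w‖ ≤ r := le_trans
      (mul_le_mul_of_nonneg_right (by linarith) (norm_nonneg w)) this
    rw [add_mul, one_mul, div_mul_cancel₀ _ (ne_of_gt hwpos)] at this
    linarith
  -- choose ε
  have hclU : (closure U).Nonempty := ⟨z, subset_closure (Metric.mem_ball_self hρ)⟩
  have hε₁ : 0 < Metric.infDist (Γ t) (closure U) :=
    (isClosed_closure.notMem_iff_infDist_pos hclU).1 hend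
  have hΓtA : Γ t ∉ Set.range ⇑γ := fun hmem => hAKt _ (Or.inl hmem) hΓtK
  have hε₂ : 0 < Metric.infDist (Γ t) (Set.range ⇑γ) :=
    (hPcomp.isClosed.notMem_iff_infDist_pos ⟨y, 0, γ.source⟩).1 hΓtA
  have hΓtR : ‖Γ t‖ ≤ R := by
    have := hR hΓtK
    rwa [Metric.mem_closedBall, dist_eq_norm, sub_zero] at this
  have hε₃ : 0 < ‖w‖ - ‖Γ t‖ := by linarith
  set ε : ℝ := min (Metric.infDist (Γ t) (closure U))
    (min (Metric.infDist (Γ t) (Set.range ⇑γ)) (‖w‖ - ‖Γ t‖)) with hεdef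
  have hε : 0 < ε := lt_min hε₁ (lt_min hε₂ hε₃)
  -- choose δ by continuity
  obtain ⟨δ', hδ', hδ'prop⟩ := Metric.continuous_iff.1 hΓ t ε hε
  refine ⟨δ' / 2, half_pos hδ', fun s hs => ?_⟩
  obtain ⟨hts, hsδ⟩ := hs
  have hnear : ∀ u ∈ Set.Icc t s, dist (Γ u) (Γ t) < ε := by
    intro u hu
    apply hδ'prop
    rw [Real.dist_eq, abs_of_nonneg (by linarith [hu.1])]
    linarith [hu.2]
  set Ks : Set ℂ := Γ '' Set.Icc 0 s with hKsdef
  have hKsc : IsCompact Ks := isCompact_Icc.image hΓ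
  have hsplit : Set.Icc 0 s = Set.Icc 0 t ∪ Set.Icc t s :=
    (Set.Icc_union_Icc_eq_Icc ht.le hts).symm
  have hKsKt : Ks = Kt ∪ Γ '' Set.Icc t s := by rw [hKsdef, hsplit, Set.image_union]
  have hKtKs : Kt ⊆ Ks := Set.image_mono (Set.Icc_subset_Icc_right hts)
  -- new points avoid closure U and A
  have hnewU : ∀ u ∈ Set.Icc t s, Γ u ∉ closure U := fun u hu hmem => by
    have h1 : Metric.infDist (Γ t) (closure U) ≤ dist (Γ t) (Γ u) :=
      Metric.infDist_le_dist_of_mem hmem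
    have h2 := hnear u hu
    rw [dist_comm] at h2
    have h3 : ε ≤ Metric.infDist (Γ t) (closure U) := min_le_left _ _
    linarith
  have hnewA : ∀ u ∈ Set.Icc t s, Γ u ∉ A := by
    rintro u hu (hv | hv)
    · have h1 : Metric.infDist (Γ t) (Set.range ⇑γ) ≤ dist (Γ t) (Γ u) :=
        Metric.infDist_le_dist_of_mem hv
      have h2 := hnear u hu
      rw [dist_comm] at h2
      have h3 : ε ≤ Metric.infDist (Γ t) (Set.range ⇑γ) :=
        le_trans (min_le_right _ _) (min_le_left _ _)
      linarith
    · have h1 := hrayNorm _ hv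
      have h2 := hnear u hu
      have h3 : ε ≤ ‖w‖ - ‖Γ t‖ := le_trans (min_le_right _ _) (min_le_right _ _)
      have h4 : ‖Γ u‖ - ‖Γ t‖ ≤ dist (Γ u) (Γ t) := by
        rw [dist_eq_norm]; exact norm_sub_norm_le _ _
      linarith
  have hAKs : ∀ v ∈ A, v ∉ Ks := by
    intro v hv hmem
    rw [hKsKt] at hmem
    rcases hmem with hmem | ⟨u, hu, rfl⟩
    · exact hAKt v hv hmem
    · exact hnewA u hu hv
  -- y is in the unbounded part of Ksᶜ
  have hyKs : y ∈ unboundedPart Ks := by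
    refine ⟨hAKs y hyA, fun hb => hAunb (hb.subset ?_)⟩
    exact hAconn.subset_connectedComponentIn hyA (fun v hv => hAKs v hv)
  -- Ks ∩ U ⊆ Kt
  have hKsU : ∀ v ∈ Ks, v ∈ U → v ∈ Kt := by
    intro v hv hvU
    rw [hKsKt] at hv
    rcases hv with hv | ⟨u, hu, rfl⟩
    · exact hv
    · exact absurd (subset_closure hvU) (hnewU u hu)
  constructor
  · -- nonemptiness: segment from y to x₀ crosses the frontier
    have hseg : segment ℝ y x₀ ⊆ U := (convex_ball z ρ).segment_subset hyU hx₀U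
    have hsegconn : IsPreconnected (segment ℝ y x₀) := (convex_segment y x₀).isPreconnected
    have h1 : (segment ℝ y x₀ ∩ unboundedPart Ks).Nonempty :=
      ⟨y, left_mem_segment ℝ y x₀, hyKs⟩
    have h2 : (segment ℝ y x₀ \ unboundedPart Ks).Nonempty :=
      ⟨x₀, right_mem_segment ℝ y x₀, fun hc => hc.1 (hKtKs hx₀K)⟩
    obtain ⟨p, hp1, hp2⟩ := cross_frontier hsegconn h1 h2
    exact ⟨p, hseg hp1, hp2⟩
  · -- inclusion
    rintro x ⟨hxU, hxF⟩
    have hxKs : x ∈ Ks := outerFrontier_subset hKsc.isClosed hxF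
    have hxKt : x ∈ Kt := hKsU x hxKs hxU
    refine ⟨hxU, ?_⟩
    have hxcl : x ∈ closure (unboundedPart Kt) :=
      closure_mono (unboundedPart_anti hKtKs) (frontier_subset_closure hxF)
    have hxnot : x ∉ unboundedPart Kt := fun hc => hc.1 hxKt
    rw [outerFrontier, (isOpen_unboundedPart hKtc.isClosed).frontier_eq]
    exact ⟨hxcl, hxnot⟩
end
end
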